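/- arXiv:0902.1470 — 2 statements merged into one kernel-verified Lean document; each statement's English description precedes it below -/
import Mathlib

section
/- Let S be a semitransitive subsemigroup of the singular part I_n \ S_n with |S| ≤ 2n, and let ≥ be the semitransitivity preorder induced by S. If x, y ∈ X lie in the same transitivity block (i.e., x ≥ y and y ≥ x), then there exists α ∈ S with α(x) = y such that every u in the domain of α satisfies u ≥ α(u) and α(u) ≥ u (i.e., α has no arrows between distinct transitivity blocks). -/
/-!
Let `φ, ψ ∈ S` with `φ x = y` and `ψ y = x`, so that `β = φψ` fixes `x`. In the finite monoid
`I_n` some power `e = β^m` (`m ≥ 1`) is idempotent, and an idempotent partial permutation is the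
identity on its domain. Take `α = eφ`: then `α x = y`, and an arrow `u → v` of `α` is an arrow of
`φ` with `e u = u`. Writing `e = φ (ψ β^(m-1))`, the element `ψ β^(m-1) ∈ S` maps `v` back to `u`.
-/

/-- `ISemi n` is the symmetric inverse semigroup `I_n`, realized as the set of all
partial injective maps (partial permutations) of the `n`-element set `Fin n`,
with composition given by `PEquiv.trans` (apply the left factor first, matching
the right-action convention `x φ`). -/
abbrev ISemi (n : ℕ) := PEquiv (Fin n) (Fin n)

/-- `S` is a subsemigroup of `I_n`: a subset closed under composition. -/
def IsSubsemigroup {n : ℕ} (S : Set (ISemi n)) : Prop :=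
  ∀ a ∈ S, ∀ b ∈ S, a.trans b ∈ S

/-- `φ` belongs to the singular part `I_n \ S_n`: its domain is a proper subset
of the underlying set, i.e. it is undefined somewhere. -/
def IsSingular {n : ℕ} (φ : ISemi n) : Prop :=
  ∃ x : Fin n, φ x = none

/-- `S` is semitransitive: for all `x, y` there is `φ ∈ S` with `φ x = y` or `φ y = x`. -/
def Semitransitive {n : ℕ} (S : Set (ISemi n)) : Prop :=
  ∀ x y : Fin n, ∃ φ ∈ S, φ x = some y ∨ φ y = some x

/-- The semitransitivity preorder induced by `S`: `x ≥ y` iff some `φ ∈ S` maps `x` to `y`. -/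
def STGe {n : ℕ} (S : Set (ISemi n)) (x y : Fin n) : Prop :=
  ∃ φ ∈ S, φ x = some y

/-- The transitivity block of `x`: the equivalence class of `x` under `x ≥ y ∧ y ≥ x`. -/
def STBlock {n : ℕ} (S : Set (ISemi n)) (x : Fin n) : Set (Fin n) :=
  {y | STGe S x y ∧ STGe S y x}

/-- `k`-th power of `φ` under composition (`pePow φ 0` is the identity). -/
def pePow {n : ℕ} (φ : ISemi n) : ℕ → ISemi n
  | 0 => PEquiv.refl (Fin n)
  | k + 1 => (pePow φ k).trans φ

namespace PEquiv

variable {α β : Type*}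

/-- Composition in the paper's right-action convention: `f * g` applies `f` first. -/
instance instMonoid : Monoid (α ≃. α) where
  mul f g := f.trans g
  one := PEquiv.refl α
  mul_assoc := trans_assoc
  one_mul := refl_trans
  mul_one := trans_refl

theorem mul_def (f g : α ≃. α) : f * g = f.trans g := rfl

instance instFinite [Finite α] [Finite β] : Finite (α ≃. β) :=
  Finite.of_injective (fun f : α ≃. β => (f : α → Option β)) fun _ _ h => ext (congrFun h)

theorem pow_apply_eq_self {f : α ≃. α} {a : α} (h : f a = some a) (k : ℕ) :
    (f ^ k) a = some a := by
  induction k with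
  | zero => exact refl_apply a
  | succ k ih => rw [pow_succ, mul_def, trans_eq_some]; exact ⟨a, ih, h⟩

theorem eq_of_apply_eq_some_of_isIdempotentElem {e : α ≃. α} (he : IsIdempotentElem e) {a b : α}
    (h : e a = some b) : b = a := by
  obtain ⟨c, hac, hcb⟩ := (trans_eq_some e e a b).1 (by rw [← mul_def, he.eq]; exact h)
  obtain rfl : c = b := Option.some_inj.1 (hac.symm.trans h)
  exact PEquiv.inj e hcb hac

end PEquiv

theorem exists_isIdempotentElem_pow {M : Type*} [Monoid M] [Finite M] (a : M) :
    ∃ m, 0 < m ∧ IsIdempotentElem (a ^ m) := by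
  obtain ⟨i, j, hne, hij⟩ := Finite.exists_ne_map_eq_of_infinite (fun k : ℕ => a ^ k)
  wlog hlt : i < j generalizing i j
  · exact this j i hne.symm hij.symm (by omega)
  obtain ⟨p, hp, rfl⟩ : ∃ p, 0 < p ∧ j = i + p := ⟨j - i, by omega, by omega⟩
  have hperiod : ∀ q k, a ^ (i + k + q * p) = a ^ (i + k) := by
    intro q k
    induction q with
    | zero => simp
    | succ q ih =>
      calc a ^ (i + k + (q + 1) * p) = a ^ (i + p) * a ^ (k + q * p) := by
            rw [← pow_add]; ring_nf
        _ = a ^ (i + k + q * p) := by rw [← hij, ← pow_add]; ring_nf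
        _ = a ^ (i + k) := ih
  have him : i + 1 ≤ (i + 1) * p := Nat.le_mul_of_pos_right (i + 1) hp
  refine ⟨(i + 1) * p, by omega, ?_⟩
  have := hperiod (i + 1) ((i + 1) * p - i)
  rw [Nat.add_sub_cancel' (by omega)] at this
  exact (pow_add _ _ _).symm.trans this

theorem IsSubsemigroup.mul_pow_mem {n : ℕ} {S : Set (ISemi n)} (hS : IsSubsemigroup S)
    {a b : ISemi n} (ha : a ∈ S) (hb : b ∈ S) (k : ℕ) : a * b ^ k ∈ S := by
  induction k with
  | zero => simpa using ha
  | succ k ih => rw [pow_succ, ← mul_assoc]; exact hS _ ih _ hb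

theorem stmt4_general (n : ℕ) (S : Set (ISemi n))
    (hsub : IsSubsemigroup S)
    (x y : Fin n) (hxy : STGe S x y) (hyx : STGe S y x) :
    ∃ α ∈ S, α x = some y ∧
      ∀ u v : Fin n, α u = some v → STGe S u v ∧ STGe S v u := by
  obtain ⟨φ, hφ, hφx⟩ := hxy
  obtain ⟨ψ, hψ, hψy⟩ := hyx
  set β := φ * ψ
  have hβ : β ∈ S := hsub φ hφ ψ hψ
  have hβx : β x = some x := (PEquiv.trans_eq_some φ ψ x x).2 ⟨y, hφx, hψy⟩
  obtain ⟨m, hm, he⟩ := exists_isIdempotentElem_pow β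
  obtain ⟨k, rfl⟩ : ∃ k, m = k + 1 := ⟨m - 1, by omega⟩
  have hfactor : β ^ (k + 1) = φ * (ψ * β ^ k) := by rw [pow_succ', mul_assoc]
  have heS : β ^ (k + 1) ∈ S := pow_succ' β k ▸ hsub.mul_pow_mem hβ hβ k
  refine ⟨β ^ (k + 1) * φ, hsub _ heS _ hφ,
    (PEquiv.trans_eq_some _ _ _ _).2 ⟨x, PEquiv.pow_apply_eq_self hβx _, hφx⟩, ?_⟩
  intro u v huv
  obtain ⟨w, huw, hwv⟩ := (PEquiv.trans_eq_some _ _ _ _).1 huv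
  obtain rfl := PEquiv.eq_of_apply_eq_some_of_isIdempotentElem he huw
  refine ⟨⟨_, hsub _ heS _ hφ, huv⟩, ψ * β ^ k, hsub.mul_pow_mem hψ hβ k, ?_⟩
  obtain ⟨v', hv', hback⟩ := (PEquiv.trans_eq_some _ _ _ _).1 (hfactor ▸ huw)
  obtain rfl : v' = v := Option.some_inj.1 (hv'.symm.trans hwv)
  exact hback

/-- if `x, y` lie in the same transitivity block of a semitransitive
subsemigroup `S` of the singular part with `|S| ≤ 2n`, then some `α ∈ S` has an
arrow `x → y` and all its arrows stay within a single transitivity block. -/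
theorem stmt4 (n : ℕ) (hn : 1 ≤ n) (S : Set (ISemi n))
    (hsub : IsSubsemigroup S)
    (hsing : ∀ φ ∈ S, IsSingular φ)
    (hst : Semitransitive S)
    (hcard : S.ncard ≤ 2 * n)
    (x y : Fin n) (hxy : STGe S x y) (hyx : STGe S y x) :
    ∃ α ∈ S, α x = some y ∧
      ∀ u v : Fin n, α u = some v → STGe S u v ∧ STGe S v u :=
  stmt4_general n S hsub x y hxy hyx
end

section
/- Let S be a semitransitive subsemigroup of the singular part I_n \ S_n with |S| ≤ 2n, let g and h be the two distinct non-zero idempotents of S, and let S' = gSg ∪ gSh ∪ hSg ∪ hSh (where eSf = {e·σ·f : σ ∈ S}). Then S' is a subsemigroup of I_n \ S_n, S' is semitransitive, and S' induces the same semitransitivity preorder as S: for all x, y ∈ X, there exists φ ∈ S' with φ(x) = y if and only if there exists φ ∈ S with φ(x) = y. -/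
/-!
Each point `x` is fixed by some element of `S` (semitransitivity with `y = x`), and the finite
semigroup of elements of `S` fixing `x` contains an idempotent; being nonzero, it is `g` or `h`.
So every point is fixed by `g` or by `h`, and any `σ ∈ S` mapping `x` to `y` can be replaced by
`eσf ∈ S'` with `e` fixing `x` and `f` fixing `y`. Since `S' ⊆ S`, the two preorders agree, and
`S'` inherits singularity from `S` and semitransitivity from the preorder.
-/

namespace PEquiv

instance {α : Type*} [Finite α] : Finite (α ≃. α) :=
  Finite.of_injective _ (DFunLike.coe_injective (F := α ≃. α))

theorem exists_idempotent_of_trans_mem {α : Type*} [Finite α] {s : Set (α ≃. α)}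
    (hne : s.Nonempty) (hs : ∀ a ∈ s, ∀ b ∈ s, a.trans b ∈ s) : ∃ e ∈ s, e.trans e = e := by
  -- Ellis–Numakura for the discrete topology: a finite semigroup has an idempotent.
  let : Semigroup (α ≃. α) := { mul := PEquiv.trans, mul_assoc := PEquiv.trans_assoc }
  let : TopologicalSpace (α ≃. α) := ⊥
  have : DiscreteTopology (α ≃. α) := ⟨rfl⟩
  exact exists_idempotent_in_compact_subsemigroup (fun _ => continuous_of_discreteTopology) s hne
    s.toFinite.isCompact hs

end PEquiv

section Sandwich

variable {n : ℕ}

theorem IsSubsemigroup.exists_idempotent_apply_eq {S : Set (ISemi n)} (hS : IsSubsemigroup S)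
    {φ : ISemi n} (hφ : φ ∈ S) {x : Fin n} (hx : φ x = some x) :
    ∃ e ∈ S, e.trans e = e ∧ e x = some x := by
  obtain ⟨e, ⟨he, hex⟩, hidem⟩ := PEquiv.exists_idempotent_of_trans_mem
    (s := {ψ ∈ S | ψ x = some x}) ⟨φ, hφ, hx⟩
    fun a ⟨ha, hax⟩ b ⟨hb, hbx⟩ => ⟨hS a ha b hb, (PEquiv.trans_eq_some ..).2 ⟨x, hax, hbx⟩⟩
  exact ⟨e, he, hidem, hex⟩

theorem Semitransitive.of_stGe_iff {S T : Set (ISemi n)} (hS : Semitransitive S)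
    (hTS : ∀ x y, STGe T x y ↔ STGe S x y) : Semitransitive T := by
  intro x y
  obtain ⟨φ, hφ, hxy | hyx⟩ := hS x y
  · obtain ⟨ψ, hψ, hψx⟩ := (hTS x y).2 ⟨φ, hφ, hxy⟩
    exact ⟨ψ, hψ, Or.inl hψx⟩
  · obtain ⟨ψ, hψ, hψy⟩ := (hTS y x).2 ⟨φ, hφ, hyx⟩
    exact ⟨ψ, hψ, Or.inr hψy⟩

/-- `⋃_{e, f ∈ E} eSf`; the set `S'` of the theorem is `sandwich {g, h} S`. -/
def sandwich (E S : Set (ISemi n)) : Set (ISemi n) :=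
  {φ | ∃ e ∈ E, ∃ σ ∈ S, ∃ f ∈ E, φ = e.trans (σ.trans f)}

variable {E S : Set (ISemi n)}

theorem sandwich_subset (hE : E ⊆ S) (hS : IsSubsemigroup S) : sandwich E S ⊆ S := by
  rintro _ ⟨e, he, σ, hσ, f, hf, rfl⟩
  exact hS e (hE he) _ (hS σ hσ f (hE hf))

theorem IsSubsemigroup.sandwich (hE : E ⊆ S) (hS : IsSubsemigroup S) :
    IsSubsemigroup (sandwich E S) := by
  rintro _ ⟨e, he, σ, hσ, f, hf, rfl⟩ _ ⟨e', he', τ, hτ, f', hf', rfl⟩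
  refine ⟨e, he, σ.trans (f.trans (e'.trans τ)), ?_, f', hf', by simp only [PEquiv.trans_assoc]⟩
  exact hS σ hσ _ (hS f (hE hf) _ (hS e' (hE he') τ hτ))

theorem stGe_sandwich_iff (hE : E ⊆ S) (hS : IsSubsemigroup S)
    (hfix : ∀ x, ∃ e ∈ E, e x = some x) (x y : Fin n) :
    STGe (sandwich E S) x y ↔ STGe S x y := by
  refine ⟨fun ⟨φ, hφ, hxy⟩ => ⟨φ, sandwich_subset hE hS hφ, hxy⟩, fun ⟨σ, hσ, hxy⟩ => ?_⟩
  obtain ⟨e, he, hex⟩ := hfix x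
  obtain ⟨f, hf, hfy⟩ := hfix y
  exact ⟨e.trans (σ.trans f), ⟨e, he, σ, hσ, f, hf, rfl⟩,
    (PEquiv.trans_eq_some ..).2 ⟨x, hex, (PEquiv.trans_eq_some ..).2 ⟨y, hxy, hfy⟩⟩⟩

theorem sandwich_pair (S : Set (ISemi n)) (g h : ISemi n) :
    {φ : ISemi n | ∃ σ ∈ S, φ = g.trans (σ.trans g) ∨ φ = g.trans (σ.trans h) ∨
      φ = h.trans (σ.trans g) ∨ φ = h.trans (σ.trans h)} = sandwich {g, h} S := by
  ext φ
  simp only [sandwich, Set.mem_ofPred_eq, Set.mem_insert_iff, Set.mem_singleton_iff,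
    exists_eq_or_imp, exists_eq_left]
  aesop

end Sandwich

theorem stmt14_general (n : ℕ) (S : Set (ISemi n))
    (hsub : IsSubsemigroup S)
    (hsing : ∀ φ ∈ S, IsSingular φ)
    (hst : Semitransitive S)
    (g h : ISemi n) (hg : g ∈ S) (hh : h ∈ S)
    (honly : ∀ e ∈ S, e.trans e = e → e ≠ ⊥ → e = g ∨ e = h)
    (S' : Set (ISemi n))
    (hS' : S' = {φ : ISemi n | ∃ σ ∈ S, φ = g.trans (σ.trans g) ∨
      φ = g.trans (σ.trans h) ∨ φ = h.trans (σ.trans g) ∨ φ = h.trans (σ.trans h)}) :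
    IsSubsemigroup S' ∧ (∀ φ ∈ S', IsSingular φ) ∧ Semitransitive S' ∧
      (∀ x y : Fin n, STGe S' x y ↔ STGe S x y) := by
  rw [hS', sandwich_pair]
  have hE : {g, h} ⊆ S := Set.insert_subset hg (Set.singleton_subset_iff.2 hh)
  have hfix : ∀ x, ∃ e ∈ ({g, h} : Set (ISemi n)), e x = some x := by
    intro x
    obtain ⟨φ, hφ, hx⟩ := hst x x
    obtain ⟨e, he, hidem, hex⟩ := hsub.exists_idempotent_apply_eq hφ (hx.elim id id)
    have he0 : e ≠ ⊥ := by rintro rfl; simp at hex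
    exact ⟨e, honly e he hidem he0, hex⟩
  have hpre := stGe_sandwich_iff hE hsub hfix
  exact ⟨hsub.sandwich hE, fun φ hφ => hsing φ (sandwich_subset hE hsub hφ), hst.of_stGe_iff hpre,
    hpre⟩

/-- with `g, h` the two distinct non-zero idempotents of a
semitransitive subsemigroup `S` of the singular part with `|S| ≤ 2n`, the set
`S' = gSg ∪ gSh ∪ hSg ∪ hSh` is a semitransitive subsemigroup of the singular
part inducing the same semitransitivity preorder as `S`. -/
theorem stmt14 (n : ℕ) (hn : 1 ≤ n) (S : Set (ISemi n))
    (hsub : IsSubsemigroup S)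
    (hsing : ∀ φ ∈ S, IsSingular φ)
    (hst : Semitransitive S)
    (hcard : S.ncard ≤ 2 * n)
    (g h : ISemi n) (hg : g ∈ S) (hh : h ∈ S) (hgh : g ≠ h)
    (hgid : g.trans g = g) (hhid : h.trans h = h) (hg0 : g ≠ ⊥) (hh0 : h ≠ ⊥)
    (honly : ∀ e ∈ S, e.trans e = e → e ≠ ⊥ → e = g ∨ e = h)
    (S' : Set (ISemi n))
    (hS' : S' = {φ : ISemi n | ∃ σ ∈ S, φ = g.trans (σ.trans g) ∨
      φ = g.trans (σ.trans h) ∨ φ = h.trans (σ.trans g) ∨ φ = h.trans (σ.trans h)}) :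
    IsSubsemigroup S' ∧ (∀ φ ∈ S', IsSingular φ) ∧ Semitransitive S' ∧
      (∀ x y : Fin n, STGe S' x y ↔ STGe S x y) :=
  stmt14_general n S hsub hsing hst g h hg hh honly S' hS'
end
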